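/- In the topology on Map(S¹,S¹) induced by the homotopic distance, for a power map f_n (n ∈ ℤ, z ↦ zⁿ, n ≠ 0) and 0 < r ≤ 1, the open ball B_r(f_n) equals the homotopy class of f_n, and for r > 1, B_r(f_n) = Map(S¹,S¹). -/

import Mathlib

open ContinuousMap Set ENNReal

/-- Homotopic distance between continuous maps `f g : C(X, Y)`: the least `k`
such that some open cover `U_0, ..., U_k` of `X` satisfies
`f|_{U i} ≃ g|_{U i}` for all `i`; `⊤` if no such cover exists. -/
noncomputable def hD {X Y : Type*} [TopologicalSpace X] [TopologicalSpace Y]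
    (f g : C(X, Y)) : ℕ∞ :=
  sInf {n : ℕ∞ | ∃ k : ℕ, n = k ∧ ∃ U : Fin (k + 1) → Set X,
    (∀ i, IsOpen (U i)) ∧ (⋃ i, U i) = univ ∧
    ∀ i, (f.restrict (U i)).Homotopic (g.restrict (U i))}

/-- The open ball of radius `r` around `f` for the homotopic distance. -/
noncomputable def hBall {X Y : Type*} [TopologicalSpace X] [TopologicalSpace Y]
    (f : C(X, Y)) (r : ℝ) : Set C(X, Y) :=
  {g | (hD f g : ℝ≥0∞) < ENNReal.ofReal r}

/-- The topology on `Map(X,Y)` induced by the homotopic distance pseudometric,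
generated by the open balls. -/
noncomputable def hTop (X Y : Type*) [TopologicalSpace X] [TopologicalSpace Y] :
    TopologicalSpace C(X, Y) :=
  TopologicalSpace.generateFrom {s | ∃ (f : C(X, Y)) (r : ℝ), 0 < r ∧ s = hBall f r}


/-- The degree-`n` power map on the circle. -/
noncomputable def fpow (n : ℤ) : C(Circle, Circle) :=
  ⟨fun z => z ^ n, by continuity⟩

/-!
Distance `0` means a one-set cover, i.e. `f ≃ g`; since `hD` takes values in `ℕ∞`, a ball of
radius `r ≤ 1` is therefore the homotopy class. The circle is covered by the two open arcs
`S¹ ∖ {1}` and `S¹ ∖ {-1}`, each homeomorphic to an open interval and hence contractible, and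
any two maps from a contractible space to a path-connected one are homotopic. So `hD f g ≤ 1`
for all `f g`, and balls of radius `r > 1` are everything.
-/

namespace ContinuousMap

theorem Homotopic.of_contractibleSpace {X Y : Type*} [TopologicalSpace X] [TopologicalSpace Y]
    [ContractibleSpace X] [PathConnectedSpace Y] (f g : C(X, Y)) : f.Homotopic g := by
  have nullhomotopic (h : C(X, Y)) : h.Nullhomotopic := by
    simpa using (id_nullhomotopic X).comp_right h
  obtain ⟨y, hfy⟩ := nullhomotopic f
  obtain ⟨y', hgy'⟩ := nullhomotopic g
  exact hfy.trans ((homotopic_const_iff.2 (PathConnectedSpace.joined y y')).trans hgy'.symm)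

theorem restrict_univ_homotopic_iff {X Y : Type*} [TopologicalSpace X] [TopologicalSpace Y]
    {f g : C(X, Y)} : (f.restrict univ).Homotopic (g.restrict univ) ↔ f.Homotopic g := by
  have restrict_univ (h : C(X, Y)) : h.restrict univ = h.comp (Homeomorph.Set.univ X) := rfl
  refine ⟨fun H => ?_, fun H => ?_⟩
  · simpa [restrict_univ, ContinuousMap.comp_assoc] using
      H.comp (Homotopic.refl ((Homeomorph.Set.univ X).symm : C(X, univ)))
  · rw [restrict_univ, restrict_univ]
    exact H.comp (Homotopic.refl _)

end ContinuousMap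

instance Circle.contractibleSpace_compl_singleton (z : Circle) :
    ContractibleSpace ({z}ᶜ : Set Circle) := by
  have : Fact (0 < 2 * Real.pi) := ⟨Real.two_pi_pos⟩
  let e := AddCircle.openPartialHomeomorphCoe (2 * Real.pi) (Complex.arg z)
  have : ContractibleSpace e.source :=
    (convex_Ioo _ _).contractibleSpace (nonempty_Ioo.2 (by simp [Real.pi_pos]))
  refine ((AddCircle.homeomorphCircle'.symm.subtype fun w => ?_).trans
    e.toHomeomorphSourceTarget.symm).contractibleSpace
  change w ≠ z ↔
    AddCircle.homeomorphCircle'.symm w ≠ (Complex.arg z : AddCircle (2 * Real.pi))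
  rw [Ne, Ne, Homeomorph.symm_apply_eq, AddCircle.homeomorphCircle'_apply_mk, Circle.exp_arg]

section HomotopicDistance

variable {X Y : Type*} [TopologicalSpace X] [TopologicalSpace Y]

theorem hD_le_of_cover {f g : C(X, Y)} {k : ℕ} (U : Fin (k + 1) → Set X)
    (hU : ∀ i, IsOpen (U i)) (hcover : ⋃ i, U i = univ)
    (hfg : ∀ i, (f.restrict (U i)).Homotopic (g.restrict (U i))) : hD f g ≤ k :=
  sInf_le ⟨k, rfl, U, hU, hcover, hfg⟩

theorem hD_eq_zero_iff {f g : C(X, Y)} : hD f g = 0 ↔ f.Homotopic g := by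
  refine ⟨fun h => ?_, fun h => ?_⟩
  · obtain ⟨k, hk, U, -, hcover, hfg⟩ := ENat.sInf_eq_zero.1 h
    obtain rfl : k = 0 := by exact_mod_cast hk.symm
    have hU : U 0 = univ := (iSup_unique (ι := Fin 1) U).symm.trans hcover
    exact ContinuousMap.restrict_univ_homotopic_iff.1 (hU ▸ hfg 0)
  · simpa using hD_le_of_cover (k := 0) (fun _ => univ) (fun _ => isOpen_univ)
      (iUnion_const _) (fun _ => ContinuousMap.restrict_univ_homotopic_iff.2 h)

theorem hBall_eq_setOf_homotopic (f : C(X, Y)) {r : ℝ} (hr₀ : 0 < r) (hr₁ : r ≤ 1) :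
    hBall f r = {g | f.Homotopic g} := by
  ext g
  simp only [hBall, mem_ofPred_eq, ← hD_eq_zero_iff]
  refine ⟨fun hg => ?_, fun hg => by simpa [hg] using hr₀⟩
  have : (hD f g : ℝ≥0∞) < 1 := hg.trans_le (ofReal_le_one.2 hr₁)
  exact Order.lt_one_iff.1 (mod_cast this)

end HomotopicDistance

theorem Circle.hD_le_one {Y : Type*} [TopologicalSpace Y] [PathConnectedSpace Y]
    (f g : C(Circle, Y)) : hD f g ≤ 1 := by
  have h1 : (1 : Circle) ≠ -1 := by
    simpa [Circle.ext_iff] using (by norm_num : (1 : ℂ) ≠ -1)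
  let U : Fin 2 → Set Circle := ![{1}ᶜ, {-1}ᶜ]
  have hU : ∀ i, ContractibleSpace (U i) := Fin.forall_fin_two.2
    ⟨Circle.contractibleSpace_compl_singleton 1,
      Circle.contractibleSpace_compl_singleton (-1)⟩
  refine hD_le_of_cover U (by simp [U, Fin.forall_fin_two]) ?_
    (fun _ => .of_contractibleSpace _ _)
  refine eq_univ_of_forall fun z => mem_iUnion.2 ?_
  by_cases hz : z = 1
  · exact ⟨1, by simpa [U, hz] using h1⟩
  · exact ⟨0, hz⟩

theorem Circle.hBall_eq_univ {Y : Type*} [TopologicalSpace Y] [PathConnectedSpace Y]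
    (f : C(Circle, Y)) {r : ℝ} (hr : 1 < r) : hBall f r = univ :=
  eq_univ_of_forall fun g => calc
    (hD f g : ℝ≥0∞) ≤ 1 := mod_cast Circle.hD_le_one f g
    _ < ENNReal.ofReal r := by simpa using hr

theorem stmt13_general (n : ℤ) :
    (∀ r : ℝ, 0 < r → r ≤ 1 → hBall (fpow n) r = {g | (fpow n).Homotopic g}) ∧
    (∀ r : ℝ, 1 < r → hBall (fpow n) r = univ) :=
  ⟨fun _ hr₀ hr₁ => hBall_eq_setOf_homotopic _ hr₀ hr₁,
    fun _ hr => Circle.hBall_eq_univ _ hr⟩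

theorem stmt13 (n : ℤ) (hn : n ≠ 0) :
    (∀ r : ℝ, 0 < r → r ≤ 1 → hBall (fpow n) r = {g | (fpow n).Homotopic g}) ∧
    (∀ r : ℝ, 1 < r → hBall (fpow n) r = univ) :=
  stmt13_general n
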